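/- arXiv:1607.08681 — 3 statements merged into one kernel-verified Lean document; each statement's English description precedes it below -/
import Mathlib

section
/- Let D be a finite set of points in the Euclidean plane ℝ², let p ∈ ℝ², ε > 0, and let minpts be a natural number. Let 𝒞 be a finite family of pairwise disjoint subsets of ℝ² whose union contains the circumscribed square Q = {x : ‖x − p‖_∞ ≤ ε}. If the selectivity estimate Σ_{C ∈ 𝒞, C ∩ Q ≠ ∅} |D ∩ C| is strictly less than minpts, then |N_ε(p)| < minpts, i.e., the ε-neighborhood of p is guaranteed to be sparse and the expensive range query on the index can be avoided. -/
open Classical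

lemma EuclideanSpace.abs_sub_apply_le_of_dist_le {ι : Type*} [Fintype ι]
    {p x : EuclideanSpace ℝ ι} {ε : ℝ} (h : dist p x ≤ ε) (i : ι) :
    |x i - p i| ≤ ε :=
  calc |x i - p i| = dist (x i) (p i) := (Real.dist_eq _ _).symm
    _ ≤ dist x p := PiLp.dist_apply_le x p i
    _ = dist p x := dist_comm x p
    _ ≤ ε := h

lemma Set.ncard_inter_le_sum_ncard_inter_of_subset_iUnion {α ι : Type*} [Fintype ι]
    {D Q : Set α} (hD : D.Finite) {C : ι → Set α} (hcov : Q ⊆ ⋃ j, C j) :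
    (D ∩ Q).ncard ≤ ∑ j ∈ Finset.univ.filter (fun j => (C j ∩ Q).Nonempty), (D ∩ C j).ncard := by
  have hsub : D ∩ Q ⊆ ⋃ j ∈ Finset.univ.filter (fun j => (C j ∩ Q).Nonempty), D ∩ C j := by
    rintro x ⟨hxD, hxQ⟩
    obtain ⟨j, hj⟩ := Set.mem_iUnion.mp (hcov hxQ)
    exact Set.mem_biUnion (Finset.mem_filter.mpr ⟨Finset.mem_univ j, x, hj, hxQ⟩) ⟨hxD, hj⟩
  calc (D ∩ Q).ncard
      ≤ (⋃ j ∈ Finset.univ.filter (fun j => (C j ∩ Q).Nonempty), D ∩ C j).ncard :=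
        Set.ncard_le_ncard hsub (hD.subset (Set.iUnion₂_subset fun _ _ => Set.inter_subset_left))
    _ ≤ _ := Finset.set_ncard_biUnion_le _ _

theorem sgpl_prunes_sparse_neighborhood_general
    (D : Set (EuclideanSpace ℝ (Fin 2))) (hD : D.Finite)
    (p : EuclideanSpace ℝ (Fin 2)) (ε : ℝ) (minpts : ℕ)
    (m : ℕ) (C : Fin m → Set (EuclideanSpace ℝ (Fin 2)))
    (hcov : {x : EuclideanSpace ℝ (Fin 2) | |x 0 - p 0| ≤ ε ∧ |x 1 - p 1| ≤ ε}
      ⊆ ⋃ j, C j)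
    (hest : ∑ j ∈ Finset.univ.filter (fun j : Fin m =>
          (C j ∩ {x : EuclideanSpace ℝ (Fin 2) |
            |x 0 - p 0| ≤ ε ∧ |x 1 - p 1| ≤ ε}).Nonempty),
        (D ∩ C j).ncard < minpts) :
    {x ∈ D | dist p x ≤ ε}.ncard < minpts := by
  set Q : Set (EuclideanSpace ℝ (Fin 2)) := {x | |x 0 - p 0| ≤ ε ∧ |x 1 - p 1| ≤ ε}
  have hball : {x ∈ D | dist p x ≤ ε} ⊆ D ∩ Q := fun x ⟨hxD, hx⟩ =>
    ⟨hxD, EuclideanSpace.abs_sub_apply_le_of_dist_le hx 0,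
      EuclideanSpace.abs_sub_apply_le_of_dist_le hx 1⟩
  calc {x ∈ D | dist p x ≤ ε}.ncard
      ≤ (D ∩ Q).ncard := Set.ncard_le_ncard hball (hD.subset Set.inter_subset_left)
    _ ≤ _ := Set.ncard_inter_le_sum_ncard_inter_of_subset_iUnion hD hcov
    _ < minpts := hest

/-- If the SGPL selectivity estimate (sum of cell counts over the cells
meeting the circumscribed square) is strictly below `minpts`, then the
ε-neighborhood of `p` within `D` is guaranteed to be sparse. -/
theorem sgpl_prunes_sparse_neighborhood
    (D : Set (EuclideanSpace ℝ (Fin 2))) (hD : D.Finite)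
    (p : EuclideanSpace ℝ (Fin 2)) (ε : ℝ) (hε : 0 < ε) (minpts : ℕ)
    (m : ℕ) (C : Fin m → Set (EuclideanSpace ℝ (Fin 2)))
    (hdisj : Pairwise (Function.onFun Disjoint C))
    (hcov : {x : EuclideanSpace ℝ (Fin 2) | |x 0 - p 0| ≤ ε ∧ |x 1 - p 1| ≤ ε}
      ⊆ ⋃ j, C j)
    (hest : ∑ j ∈ Finset.univ.filter (fun j : Fin m =>
          (C j ∩ {x : EuclideanSpace ℝ (Fin 2) |
            |x 0 - p 0| ≤ ε ∧ |x 1 - p 1| ≤ ε}).Nonempty),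
        (D ∩ C j).ncard < minpts) :
    {x ∈ D | dist p x ≤ ε}.ncard < minpts :=
  sgpl_prunes_sparse_neighborhood_general D hD p ε minpts m C hcov hest
end

section
/- Reachability is symmetric on core objects: let D be a finite set of points in a metric space, ε > 0, and minpts a natural number. If p ∈ D is a core object and p is reachable from q ∈ D (with regard to ε and minpts), then q is reachable from p. -/
/-- The ε-neighborhood of `p` within `D`. -/
def epsNeighborhood {X : Type*} [MetricSpace X] (D : Set X) (ε : ℝ) (p : X) :
    Set X :=
  {x ∈ D | dist p x ≤ ε}

/-- `p` is a core object of `D` w.r.t. `ε` and `minpts`. -/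
def IsCore {X : Type*} [MetricSpace X] (D : Set X) (ε : ℝ) (minpts : ℕ)
    (p : X) : Prop :=
  minpts ≤ (epsNeighborhood D ε p).ncard

/-- `pi` is directly reachable from `pj` w.r.t. `ε` and `minpts`. -/
def DirectlyReachable {X : Type*} [MetricSpace X] (D : Set X) (ε : ℝ)
    (minpts : ℕ) (pi pj : X) : Prop :=
  pi ∈ epsNeighborhood D ε pj ∧ minpts ≤ (epsNeighborhood D ε pj).ncard

/-- `pi` is reachable from `pj`: there is a chain `c 0 = pi, …, c n = pj` of
objects of `D` such that `c m` is directly reachable from `c (m+1)`. -/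
def ReachableFrom {X : Type*} [MetricSpace X] (D : Set X) (ε : ℝ)
    (minpts : ℕ) (pi pj : X) : Prop :=
  ∃ n : ℕ, ∃ c : Fin (n + 1) → X,
    (∀ m, c m ∈ D) ∧ c 0 = pi ∧ c (Fin.last n) = pj ∧
    ∀ m : Fin n, DirectlyReachable D ε minpts (c m.castSucc) (c m.succ)

/-! Every object on a chain that starts at a core object is a core object, since each later one is
the centre of a direct-reachability step. As the ε-neighborhood relation is symmetric within `D`,
the reversed chain is then again a chain. -/

section

variable {X : Type*} [MetricSpace X] {D : Set X} {ε : ℝ} {minpts : ℕ}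

lemma mem_epsNeighborhood_comm {p x : X} (hp : p ∈ D) (hx : x ∈ epsNeighborhood D ε p) :
    p ∈ epsNeighborhood D ε x :=
  ⟨hp, dist_comm x p ▸ hx.2⟩

lemma DirectlyReachable.isCore {a b : X} (h : DirectlyReachable D ε minpts a b) :
    IsCore D ε minpts b :=
  h.2

lemma DirectlyReachable.symm {a b : X} (h : DirectlyReachable D ε minpts a b) (hb : b ∈ D)
    (ha : IsCore D ε minpts a) : DirectlyReachable D ε minpts b a :=
  ⟨mem_epsNeighborhood_comm hb h.1, ha⟩

lemma isCore_of_chain {n : ℕ} {c : Fin (n + 1) → X}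
    (hstep : ∀ m : Fin n, DirectlyReachable D ε minpts (c m.castSucc) (c m.succ))
    (h0 : IsCore D ε minpts (c 0)) (m : Fin (n + 1)) : IsCore D ε minpts (c m) := by
  rcases Fin.eq_zero_or_eq_succ m with rfl | ⟨j, rfl⟩
  · exact h0
  · exact (hstep j).isCore

end

theorem reachable_symm_of_core_general {X : Type*} [MetricSpace X]
    (D : Set X) (ε : ℝ) (minpts : ℕ)
    (p q : X)
    (hpc : IsCore D ε minpts p)
    (h : ReachableFrom D ε minpts p q) :
    ReachableFrom D ε minpts q p := by
  obtain ⟨n, c, hmem, rfl, rfl, hstep⟩ := h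
  refine ⟨n, fun k => c k.rev, fun k => hmem _, by simp, by simp, fun m => ?_⟩
  simp only [Fin.rev_castSucc, Fin.rev_succ]
  exact (hstep m.rev).symm (hmem _) (isCore_of_chain hstep hpc _)

/-- Reachability is symmetric on core objects: if `p` is a core object and
`p` is reachable from `q`, then `q` is reachable from `p`. -/
theorem reachable_symm_of_core {X : Type*} [MetricSpace X]
    (D : Set X) (hD : D.Finite) (ε : ℝ) (hε : 0 < ε) (minpts : ℕ)
    (p q : X) (hp : p ∈ D) (hq : q ∈ D)
    (hpc : IsCore D ε minpts p)
    (h : ReachableFrom D ε minpts p q) :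
    ReachableFrom D ε minpts q p :=
  reachable_symm_of_core_general D ε minpts p q hpc h
end

section
/- Two clusters that share a core object coincide: let D be a finite set of points in a metric space, ε > 0, and minpts a natural number. Let R₁ and R₂ be clusters of D (maximal subsets of D in which any two objects are connected with regard to ε and minpts). If there exists a core object x with x ∈ R₁ and x ∈ R₂, then R₁ = R₂. (This underlies the paper's claim that the maximality of each cluster implies that the top-k returned clusters do not overlap.) -/
/-- `pi` and `pj` are connected: both are reachable from some `pm ∈ D`. -/
def ConnectedObjects {X : Type*} [MetricSpace X] (D : Set X) (ε : ℝ)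
    (minpts : ℕ) (pi pj : X) : Prop :=
  ∃ pm ∈ D, ReachableFrom D ε minpts pi pm ∧ ReachableFrom D ε minpts pj pm

/-- A cluster of `D`: a subset of `D` whose objects are pairwise connected,
maximal with this property among subsets of `D`. -/
def IsCluster {X : Type*} [MetricSpace X] (D : Set X) (ε : ℝ) (minpts : ℕ)
    (R : Set X) : Prop :=
  R ⊆ D ∧ (∀ a ∈ R, ∀ b ∈ R, ConnectedObjects D ε minpts a b) ∧
    ∀ R' : Set X, R' ⊆ D →
      (∀ a ∈ R', ∀ b ∈ R', ConnectedObjects D ε minpts a b) →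
      R ⊆ R' → R' = R


section Aux

variable {X : Type*} [MetricSpace X] (D : Set X) (ε : ℝ) (minpts : ℕ)

/-- The step relation with membership of the target in `D`. -/
def StepRel (a b : X) : Prop :=
  DirectlyReachable D ε minpts a b ∧ b ∈ D

lemma chain_rtg : ∀ (n : ℕ) (c : Fin (n + 1) → X), (∀ m, c m ∈ D) →
    (∀ m : Fin n, DirectlyReachable D ε minpts (c m.castSucc) (c m.succ)) →
    Relation.ReflTransGen (StepRel D ε minpts) (c 0) (c (Fin.last n)) := by
  intro n
  induction n with
  | zero => intro c _ _; exact Relation.ReflTransGen.refl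
  | succ n ih =>
    intro c hmem hstep
    have h0 : StepRel D ε minpts (c 0) ((c ∘ Fin.succ) 0) := by
      refine ⟨?_, hmem _⟩
      simpa using hstep 0
    have htail := ih (c ∘ Fin.succ) (fun m => hmem _) (fun m => by
      have h := hstep m.succ; rw [← Fin.succ_castSucc] at h; exact h)
    have hl : (c ∘ Fin.succ) (Fin.last n) = c (Fin.last (n + 1)) := by
      simp [Fin.succ_last]
    exact Relation.ReflTransGen.head h0 (hl ▸ htail)

lemma reach_iff (p q : X) :
    ReachableFrom D ε minpts p q ↔
      p ∈ D ∧ Relation.ReflTransGen (StepRel D ε minpts) p q := by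
  constructor
  · rintro ⟨n, c, hmem, h0, hl, hstep⟩
    refine ⟨h0 ▸ hmem 0, ?_⟩
    have := chain_rtg D ε minpts n c hmem hstep
    rwa [h0, hl] at this
  · rintro ⟨hp, h⟩
    induction h with
    | refl => exact ⟨0, fun _ => p, fun _ => hp, rfl, rfl, fun m => m.elim0⟩
    | @tail b q hab hr ih =>
      obtain ⟨n, c, hmem, h0, hl, hstep⟩ := ih
      refine ⟨n + 1, Fin.snoc c q, ?_, ?_, ?_, ?_⟩
      · intro m
        refine Fin.lastCases ?_ (fun i => ?_) m
        · simpa using hr.2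
        · simpa using hmem i
      · have : (0 : Fin (n + 2)) = Fin.castSucc 0 := rfl
        rw [this, Fin.snoc_castSucc]; exact h0
      · simp
      · intro m
        refine Fin.lastCases ?_ (fun i => ?_) m
        · have h1 : (Fin.last n).castSucc = Fin.castSucc (Fin.last n) := rfl
          have h2 : (Fin.last n).succ = Fin.last (n + 1) := by simp
          rw [h1, Fin.snoc_castSucc, h2, Fin.snoc_last, hl]
          exact hr.1
        · have h2 : (i.castSucc).succ = (i.succ).castSucc := Fin.succ_castSucc i
          rw [Fin.snoc_castSucc, h2, Fin.snoc_castSucc]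
          exact hstep i

lemma rtg_rev {x : X} (hx : IsCore D ε minpts x) (hxD : x ∈ D) :
    ∀ {p : X}, Relation.ReflTransGen (StepRel D ε minpts) x p →
      Relation.ReflTransGen (StepRel D ε minpts) p x ∧
        IsCore D ε minpts p ∧ p ∈ D := by
  intro p h
  induction h with
  | refl => exact ⟨Relation.ReflTransGen.refl, hx, hxD⟩
  | @tail b q hab hr ih =>
    obtain ⟨ihr, ihcore, ihD⟩ := ih
    obtain ⟨⟨hbD, hdist⟩, hqcore⟩ := hr.1
    have hstep : StepRel D ε minpts q b :=
      ⟨⟨⟨hr.2, by rwa [dist_comm]⟩, ihcore⟩, ihD⟩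
    exact ⟨Relation.ReflTransGen.head hstep ihr, hqcore, hr.2⟩

end Aux

/-- Two clusters that share a core object coincide. -/
theorem clusters_sharing_core_eq {X : Type*} [MetricSpace X]
    (D : Set X) (hD : D.Finite) (ε : ℝ) (hε : 0 < ε) (minpts : ℕ)
    (R₁ R₂ : Set X) (h₁ : IsCluster D ε minpts R₁)
    (h₂ : IsCluster D ε minpts R₂)
    (x : X) (hxc : IsCore D ε minpts x) (hx₁ : x ∈ R₁) (hx₂ : x ∈ R₂) :
    R₁ = R₂ := by
  have hxD : x ∈ D := h₁.1 hx₁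
  -- every element of R₁ ∪ R₂ reaches x
  have hreach : ∀ a ∈ R₁ ∪ R₂, ReachableFrom D ε minpts a x := by
    intro a ha
    have hconn : ConnectedObjects D ε minpts a x := by
      rcases ha with ha | ha
      · exact h₁.2.1 a ha x hx₁
      · exact h₂.2.1 a ha x hx₂
    obtain ⟨pm, hpmD, hra, hrx⟩ := hconn
    rw [reach_iff] at hra hrx ⊢
    refine ⟨hra.1, hra.2.trans ?_⟩
    exact (rtg_rev D ε minpts hxc hxD hrx.2).1
  have hpair : ∀ a ∈ R₁ ∪ R₂, ∀ b ∈ R₁ ∪ R₂, ConnectedObjects D ε minpts a b :=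
    fun a ha b hb => ⟨x, hxD, hreach a ha, hreach b hb⟩
  have hsub : R₁ ∪ R₂ ⊆ D := Set.union_subset h₁.1 h₂.1
  have e1 : R₁ ∪ R₂ = R₁ := h₁.2.2 _ hsub hpair Set.subset_union_left
  have e2 : R₁ ∪ R₂ = R₂ := h₂.2.2 _ hsub hpair Set.subset_union_right
  rw [← e1, e2]
end
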